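/- arXiv:2404.08843 — 2 statements merged into one kernel-verified Lean document; each statement's English description precedes it below -/
import Mathlib

section
/- If W is a term idempotent variety and A belongs to the Mal'tsev product V ∘ W for some variety V of the same type, then each class of the W-replica congruence of A is either a subalgebra of A or a singleton. -/
structure Alg (Ω : Type) (ar : Ω → ℕ) : Type 1 where
  carrier : Type
  interp : ∀ ω : Ω, (Fin (ar ω) → carrier) → carrier

inductive Term (Ω : Type) (ar : Ω → ℕ) (X : Type) : Type
  | var : X → Term Ω ar X
  | op : (ω : Ω) → (Fin (ar ω) → Term Ω ar X) → Term Ω ar X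

variable {Ω : Type} {ar : Ω → ℕ} {X Y : Type}

def Term.eval (A : Alg Ω ar) (v : X → A.carrier) : Term Ω ar X → A.carrier
  | .var x => v x
  | .op ω ts => A.interp ω fun i => (ts i).eval A v

def Term.subst (σ : X → Term Ω ar Y) : Term Ω ar X → Term Ω ar Y
  | .var x => σ x
  | .op ω ts => .op ω fun i => (ts i).subst σ

def Term.varSet : Term Ω ar X → Set X
  | .var x => {x}
  | .op _ ts => ⋃ i, (ts i).varSet

def Satisfies (A : Alg Ω ar) (p q : Term Ω ar X) : Prop :=
  ∀ v : X → A.carrier, p.eval A v = q.eval A v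

/-- `V ⊨ p = q` for a class of algebras `V`. -/
def VSat (V : Alg Ω ar → Prop) (p q : Term Ω ar X) : Prop :=
  ∀ A, V A → Satisfies A p q

/-- `p` is a term idempotent of `V`: `V ⊨ ω(p,…,p) = p` for every basic operation `ω`. -/
def TermIdem (V : Alg Ω ar → Prop) (p : Term Ω ar X) : Prop :=
  ∀ ω : Ω, VSat V (Term.op ω fun _ => p) p

/-- `V` is a term idempotent variety: both sides of every nontrivial identity it
satisfies are term idempotents of `V`. -/
def TermIdemVariety (V : Alg Ω ar → Prop) : Prop :=
  ∀ p q : Term Ω ar ℕ, VSat V p q → p ≠ q → TermIdem V p ∧ TermIdem V q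

def Models (A : Alg Ω ar) (E : Set (Term Ω ar ℕ × Term Ω ar ℕ)) : Prop :=
  ∀ e ∈ E, Satisfies A e.1 e.2

/-- The variety (equational class) defined by the set of identities `E`. -/
def VarietyOf (E : Set (Term Ω ar ℕ × Term Ω ar ℕ)) : Alg Ω ar → Prop :=
  fun A => Models A E

structure IsCongr (A : Alg Ω ar) (r : A.carrier → A.carrier → Prop) : Prop where
  refl : ∀ a, r a a
  symm : ∀ {a b}, r a b → r b a
  trans : ∀ {a b c}, r a b → r b c → r a c
  compat : ∀ (ω : Ω) (f g : Fin (ar ω) → A.carrier),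
    (∀ i, r (f i) (g i)) → r (A.interp ω f) (A.interp ω g)

/-- Quotient algebra of `A` by a (congruence) relation `r`. -/
noncomputable def Alg.quot (A : Alg Ω ar) (r : A.carrier → A.carrier → Prop) : Alg Ω ar where
  carrier := Quot r
  interp := fun ω f => Quot.mk r (A.interp ω fun i => (f i).out)

/-- `r` is the `W`-replica congruence of `A`: the smallest congruence whose quotient lies in `W`. -/
def IsReplica (W : Alg Ω ar → Prop) (A : Alg Ω ar) (r : A.carrier → A.carrier → Prop) : Prop :=
  IsCongr A r ∧ W (A.quot r) ∧
    ∀ s : A.carrier → A.carrier → Prop, IsCongr A s → W (A.quot s) →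
      ∀ a b, r a b → s a b

/-- The `r`-class of `a` is a subalgebra of `A`. -/
def ClassIsSub (A : Alg Ω ar) (r : A.carrier → A.carrier → Prop) (a : A.carrier) : Prop :=
  ∀ (ω : Ω) (f : Fin (ar ω) → A.carrier), (∀ i, r (f i) a) → r (A.interp ω f) a

/-- The `r`-class of `a` viewed as an algebra. -/
def classAlg (A : Alg Ω ar) (r : A.carrier → A.carrier → Prop) (a : A.carrier)
    (h : ClassIsSub A r a) : Alg Ω ar where
  carrier := {b : A.carrier // r b a}
  interp := fun ω f => ⟨A.interp ω fun i => (f i).1, h ω _ fun i => (f i).2⟩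

/-- The Mal'tsev product `V ∘ W`. -/
def MalProd (V W : Alg Ω ar → Prop) (A : Alg Ω ar) : Prop :=
  ∀ r : A.carrier → A.carrier → Prop, IsReplica W A r →
    ∀ (a : A.carrier) (h : ClassIsSub A r a), V (classAlg A r a h)

structure Hom (A B : Alg Ω ar) where
  toFun : A.carrier → B.carrier
  map : ∀ ω f, toFun (A.interp ω f) = B.interp ω fun i => toFun (f i)

def IsIdem (A : Alg Ω ar) (a : A.carrier) : Prop :=
  ∀ ω : Ω, A.interp ω (fun _ => a) = a

section Aux

theorem mk_eq_iff' {A : Alg Ω ar} {r : A.carrier → A.carrier → Prop} (hr : IsCongr A r)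
    {x y : A.carrier} : Quot.mk r x = Quot.mk r y ↔ r x y := by
  rw [Quot.eq]
  exact Equivalence.eqvGen_iff ⟨hr.refl, fun h => hr.symm h, fun h h' => hr.trans h h'⟩

theorem out_rel' {A : Alg Ω ar} {r : A.carrier → A.carrier → Prop} (hr : IsCongr A r)
    (x : A.carrier) : r (Quot.mk r x).out x :=
  (mk_eq_iff' hr).1 (Quot.out_eq _)

theorem mk_interp' {A : Alg Ω ar} {r : A.carrier → A.carrier → Prop} (hr : IsCongr A r)
    (ω : Ω) (f : Fin (ar ω) → A.carrier) :
    (A.quot r).interp ω (fun i => Quot.mk r (f i)) = Quot.mk r (A.interp ω f) :=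
  (mk_eq_iff' hr).2 (hr.compat _ _ _ fun i => out_rel' hr (f i))

theorem mk_eval' {A : Alg Ω ar} {r : A.carrier → A.carrier → Prop} (hr : IsCongr A r)
    (v : X → A.carrier) :
    ∀ t : Term Ω ar X, t.eval (A.quot r) (fun x => Quot.mk r (v x)) = Quot.mk r (t.eval A v)
  | .var x => rfl
  | .op ω ts => by
    show (A.quot r).interp ω (fun i => (ts i).eval (A.quot r) (fun x => Quot.mk r (v x))) = _
    have h : (fun i => (ts i).eval (A.quot r) (fun x => Quot.mk r (v x)))
        = fun i => Quot.mk r ((ts i).eval A v) := funext fun i => mk_eval' hr v (ts i)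
    rw [h, mk_interp' hr]
    rfl

theorem eval_subst' (A : Alg Ω ar) (σ : X → Term Ω ar Y) (v : Y → A.carrier) :
    ∀ t : Term Ω ar X, (t.subst σ).eval A v = t.eval A (fun x => (σ x).eval A v)
  | .var x => rfl
  | .op ω ts => by
    show A.interp ω (fun i => ((ts i).subst σ).eval A v) = A.interp ω _
    exact congrArg _ (funext fun i => eval_subst' A σ v (ts i))

/-- One-step relation generating the `W`-replica congruence. -/
def Step (E : Set (Term Ω ar ℕ × Term Ω ar ℕ)) (A : Alg Ω ar) (x y : A.carrier) : Prop :=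
  ∃ p q : Term Ω ar ℕ, ∃ v : ℕ → A.carrier,
    VSat (VarietyOf E) p q ∧ x = p.eval A v ∧ y = q.eval A v

inductive StepGen (E : Set (Term Ω ar ℕ × Term Ω ar ℕ)) (A : Alg Ω ar) :
    A.carrier → A.carrier → Prop
  | base {x y : A.carrier} : Step E A x y → StepGen E A x y
  | refl (x : A.carrier) : StepGen E A x x
  | symm {x y : A.carrier} : StepGen E A x y → StepGen E A y x
  | trans {x y z : A.carrier} : StepGen E A x y → StepGen E A y z → StepGen E A x z

theorem stepGen_update (E : Set (Term Ω ar ℕ × Term Ω ar ℕ)) (A : Alg Ω ar) (ω : Ω)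
    (h : Fin (ar ω) → A.carrier) (i : Fin (ar ω)) {u w : A.carrier}
    (huw : StepGen E A u w) :
    StepGen E A (A.interp ω (Function.update h i u)) (A.interp ω (Function.update h i w)) := by
  induction huw with
  | base hs =>
    obtain ⟨p, q, v, hpq, hu, hw⟩ := hs
    subst hu hw
    refine .base ⟨Term.op ω (fun j => if j = i then p.subst (fun n => .var (n + ar ω))
        else .var j.val),
      Term.op ω (fun j => if j = i then q.subst (fun n => .var (n + ar ω)) else .var j.val),
      fun n => if hn : n < ar ω then h ⟨n, hn⟩ else v (n - ar ω), ?_, ?_, ?_⟩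
    · intro B hB vB
      show B.interp ω _ = B.interp ω _
      refine congrArg _ (funext fun j => ?_)
      beta_reduce
      by_cases hj : j = i
      · rw [if_pos hj, if_pos hj, eval_subst', eval_subst']
        exact hpq B hB _
      · rw [if_neg hj, if_neg hj]
    · show _ = A.interp ω _
      refine congrArg _ (funext fun j => ?_)
      beta_reduce
      by_cases hj : j = i
      · rw [Function.update_apply, if_pos hj, if_pos hj, eval_subst']
        have hvv : (fun x => Term.eval A
            (fun m => if hn : m < ar ω then h ⟨m, hn⟩ else v (m - ar ω))
            (Term.var (x + ar ω))) = v := by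
          funext n
          show (if hn : n + ar ω < ar ω then h ⟨n + ar ω, hn⟩ else v (n + ar ω - ar ω)) = v n
          rw [dif_neg (by omega)]
          congr 1
          omega
        rw [hvv]
      · rw [Function.update_of_ne hj, if_neg hj]
        show h j = if hn : j.val < ar ω then h ⟨j.val, hn⟩ else v (j.val - ar ω)
        simp [j.isLt]
    · show _ = A.interp ω _
      refine congrArg _ (funext fun j => ?_)
      beta_reduce
      by_cases hj : j = i
      · rw [Function.update_apply, if_pos hj, if_pos hj, eval_subst']
        have hvv : (fun x => Term.eval A
            (fun m => if hn : m < ar ω then h ⟨m, hn⟩ else v (m - ar ω))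
            (Term.var (x + ar ω))) = v := by
          funext n
          show (if hn : n + ar ω < ar ω then h ⟨n + ar ω, hn⟩ else v (n + ar ω - ar ω)) = v n
          rw [dif_neg (by omega)]
          congr 1
          omega
        rw [hvv]
      · rw [Function.update_of_ne hj, if_neg hj]
        show h j = if hn : j.val < ar ω then h ⟨j.val, hn⟩ else v (j.val - ar ω)
        simp [j.isLt]
  | refl => exact .refl _
  | symm _ ih => exact .symm ih
  | trans _ _ ih1 ih2 => exact .trans ih1 ih2

theorem stepGen_compat (E : Set (Term Ω ar ℕ × Term Ω ar ℕ)) (A : Alg Ω ar) (ω : Ω)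
    (f g : Fin (ar ω) → A.carrier) (hfg : ∀ i, StepGen E A (f i) (g i)) :
    StepGen E A (A.interp ω f) (A.interp ω g) := by
  have key : ∀ k : ℕ, StepGen E A (A.interp ω f)
      (A.interp ω fun i => if i.val < k then g i else f i) := by
    intro k
    induction k with
    | zero =>
      have h0 : (fun i : Fin (ar ω) => if i.val < 0 then g i else f i) = f := by
        funext i; simp
      rw [h0]; exact .refl _
    | succ k ih =>
      by_cases hk : k < ar ω
      · have hmid : Function.update (fun i : Fin (ar ω) => if i.val < k then g i else f i)
            ⟨k, hk⟩ (f ⟨k, hk⟩) = fun i => if i.val < k then g i else f i := by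
          funext j
          rcases eq_or_ne j ⟨k, hk⟩ with hj | hj
          · subst hj; simp
          · rw [Function.update_of_ne hj]
        have heq : (fun i : Fin (ar ω) => if i.val < k + 1 then g i else f i)
            = Function.update (fun i : Fin (ar ω) => if i.val < k then g i else f i)
              ⟨k, hk⟩ (g ⟨k, hk⟩) := by
          funext j
          rcases eq_or_ne j ⟨k, hk⟩ with hj | hj
          · subst hj; simp
          · rw [Function.update_of_ne hj]
            have hne : j.val ≠ k := fun hc => hj (Fin.ext hc)
            by_cases h2 : j.val < k
            · simp [h2, Nat.lt_succ_of_lt h2]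
            · have h3 : ¬ j.val < k + 1 := by omega
              simp [h2, h3]
        have step := stepGen_update E A ω (fun i : Fin (ar ω) => if i.val < k then g i else f i)
          ⟨k, hk⟩ (hfg ⟨k, hk⟩)
        rw [hmid] at step
        rw [heq]
        exact .trans ih step
      · have h4 : (fun i : Fin (ar ω) => if i.val < k + 1 then g i else f i)
            = fun i : Fin (ar ω) => if i.val < k then g i else f i := by
          funext j
          have : j.val < k := lt_of_lt_of_le j.isLt (le_of_not_gt hk)
          simp [this, Nat.lt_succ_of_lt this]
        rw [h4]; exact ih
  have hfin := key (ar ω)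
  have hg : (fun i : Fin (ar ω) => if i.val < ar ω then g i else f i) = g := by
    funext j; simp [j.isLt]
  rwa [hg] at hfin

theorem stepGen_congr (E : Set (Term Ω ar ℕ × Term Ω ar ℕ)) (A : Alg Ω ar) :
    IsCongr A (StepGen E A) :=
  ⟨.refl, .symm, .trans, stepGen_compat E A⟩

theorem quot_stepGen_mem (E : Set (Term Ω ar ℕ × Term Ω ar ℕ)) (A : Alg Ω ar) :
    VarietyOf E (A.quot (StepGen E A)) := by
  intro e he v
  have hc := stepGen_congr E A
  have hv : v = fun n => Quot.mk (StepGen E A) ((v n).out) :=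
    funext fun n => (Quot.out_eq _).symm
  rw [hv, mk_eval' hc, mk_eval' hc]
  exact Quot.sound (.base ⟨e.1, e.2, _, fun B hB => hB e he, rfl, rfl⟩)

end Aux

/-- if `W` is term idempotent and `A ∈ V ∘ W`, then each class of the
`W`-replica congruence of `A` is a subalgebra of `A` or a singleton. -/
theorem stmt_11 {Ω : Type} {ar : Ω → ℕ} (hτ : ∀ ω, 0 < ar ω)
    (V : Alg Ω ar → Prop) (E : Set (Term Ω ar ℕ × Term Ω ar ℕ))
    (hti : TermIdemVariety (VarietyOf E))
    (A : Alg Ω ar) (hA : MalProd V (VarietyOf E) A)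
    (r : A.carrier → A.carrier → Prop) (hr : IsReplica (VarietyOf E) A r)
    (a : A.carrier) :
    ClassIsSub A r a ∨ ∀ b : A.carrier, r a b → b = a := by
  by_cases hsing : ∀ b, r a b → b = a
  · exact Or.inr hsing
  left
  push_neg at hsing
  obtain ⟨b, hab, hba⟩ := hsing
  have hrc := hr.1
  have hW := hr.2.1
  have hsub : ∀ x y, r x y → StepGen E A x y :=
    fun x y => hr.2.2 _ (stepGen_congr E A) (quot_stepGen_mem E A) x y
  have main : ∀ x y, StepGen E A x y →
      x = y ∨ ((∀ ω, r (A.interp ω fun _ => x) x) ∧ (∀ ω, r (A.interp ω fun _ => y) y)) := by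
    intro x y hxy
    induction hxy with
    | @base x y hs =>
      by_cases hxy : x = y
      · exact Or.inl hxy
      right
      obtain ⟨p, q, v, hpq, hx, hy⟩ := hs
      have hpqne : p ≠ q := by
        rintro rfl
        exact hxy (hx.trans hy.symm)
      obtain ⟨hip, hiq⟩ := hti p q hpq hpqne
      constructor
      · intro ω
        have h1 := hip ω (A.quot r) hW (fun n => Quot.mk r (v n))
        have h2 : (A.quot r).interp ω
            (fun _ : Fin (ar ω) => Quot.mk r (p.eval A v)) = Quot.mk r (p.eval A v) := by
          have hL : (Term.op ω fun _ => p).eval (A.quot r) (fun n => Quot.mk r (v n))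
              = (A.quot r).interp ω (fun _ : Fin (ar ω) => Quot.mk r (p.eval A v)) := by
            show (A.quot r).interp ω _ = _
            exact congrArg _ (funext fun i => mk_eval' hrc v p)
          rw [hL] at h1
          rw [h1]
          exact mk_eval' hrc v p
        have h3 : Quot.mk r (A.interp ω fun _ => p.eval A v) = Quot.mk r (p.eval A v) :=
          (mk_interp' hrc ω (fun _ => p.eval A v)).symm.trans h2
        subst hx
        exact (mk_eq_iff' hrc).1 h3
      · intro ω
        have h1 := hiq ω (A.quot r) hW (fun n => Quot.mk r (v n))
        have h2 : (A.quot r).interp ω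
            (fun _ : Fin (ar ω) => Quot.mk r (q.eval A v)) = Quot.mk r (q.eval A v) := by
          have hL : (Term.op ω fun _ => q).eval (A.quot r) (fun n => Quot.mk r (v n))
              = (A.quot r).interp ω (fun _ : Fin (ar ω) => Quot.mk r (q.eval A v)) := by
            show (A.quot r).interp ω _ = _
            exact congrArg _ (funext fun i => mk_eval' hrc v q)
          rw [hL] at h1
          rw [h1]
          exact mk_eval' hrc v q
        have h3 : Quot.mk r (A.interp ω fun _ => q.eval A v) = Quot.mk r (q.eval A v) :=
          (mk_interp' hrc ω (fun _ => q.eval A v)).symm.trans h2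
        subst hy
        exact (mk_eq_iff' hrc).1 h3
    | refl => exact Or.inl rfl
    | symm _ ih =>
      rcases ih with rfl | ⟨h1, h2⟩
      · exact Or.inl rfl
      · exact Or.inr ⟨h2, h1⟩
    | trans _ _ ih1 ih2 =>
      rcases ih1 with rfl | ⟨h1, h2⟩
      · exact ih2
      rcases ih2 with rfl | ⟨h3, h4⟩
      · exact Or.inr ⟨h1, h2⟩
      · exact Or.inr ⟨h1, h4⟩
  have hIa : ∀ ω, r (A.interp ω fun _ => a) a := by
    rcases main a b (hsub a b hab) with h | h
    · exact absurd h.symm hba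
    · exact h.1
  intro ω f hf
  have h1 : r (A.interp ω f) (A.interp ω fun _ => a) :=
    hrc.compat ω f _ fun i => hf i
  exact hrc.trans h1 (hIa ω)
end

section
/- If V is a congruence permutable (Mal'tsev) variety and W is an idempotent variety of the same type, then the Mal'tsev product V ∘ W is a variety. -/
variable {Ω : Type} {ar : Ω → ℕ} {X Y : Type}

/-- Substitution sending variables `0, 1, 2` to `a, b, c` respectively. -/
def sub3 {Ω : Type} {ar : Ω → ℕ} (a b c : Term Ω ar ℕ) : ℕ → Term Ω ar ℕ
  | 0 => a
  | 1 => b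
  | 2 => c
  | n + 3 => .var (n + 3)

lemma eval_congr_on_varSet (A : Alg Ω ar) (t : Term Ω ar X) (v v' : X → A.carrier)
    (h : ∀ x ∈ t.varSet, v x = v' x) : t.eval A v = t.eval A v' := by
  induction t with
  | var x => exact h x rfl
  | op ω ts ih =>
    simp only [Term.eval]
    congr 1; funext i
    exact ih i fun x hx => h x (Set.mem_iUnion.mpr ⟨i, hx⟩)

lemma varSet_bounded (t : Term Ω ar ℕ) : ∃ N, ∀ x ∈ t.varSet, x < N := by
  induction t with
  | var x => exact ⟨x + 1, by simp [Term.varSet]⟩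
  | op ω ts ih =>
    choose N hN using ih
    refine ⟨(Finset.univ.sup N) + 1, fun x hx => ?_⟩
    obtain ⟨i, hi⟩ := Set.mem_iUnion.mp hx
    exact (hN i x hi).trans_le (Nat.le_succ_of_le (Finset.le_sup (Finset.mem_univ i)))

lemma hom_eval {A B : Alg Ω ar} (h : Hom A B) (t : Term Ω ar X) (v : X → A.carrier) :
    h.toFun (t.eval A v) = t.eval B (fun x => h.toFun (v x)) := by
  induction t with
  | var x => rfl
  | op ω ts ih =>
    simp only [Term.eval, h.map]
    congr 1; funext i; exact ih i

lemma subst_eval (A : Alg Ω ar) (σ : X → Term Ω ar Y) (t : Term Ω ar X) (v : Y → A.carrier) :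
    (t.subst σ).eval A v = t.eval A (fun x => (σ x).eval A v) := by
  induction t with
  | var x => rfl
  | op ω ts ih =>
    simp only [Term.subst, Term.eval]
    congr 1; funext i; exact ih i

lemma congr_eval {A : Alg Ω ar} {ρ : A.carrier → A.carrier → Prop} (hc : IsCongr A ρ)
    (t : Term Ω ar X) {v v' : X → A.carrier} (h : ∀ x, ρ (v x) (v' x)) :
    ρ (t.eval A v) (t.eval A v') := by
  induction t with
  | var x => exact h x
  | op ω ts ih => exact hc.compat _ _ _ fun i => ih i

lemma classAlg_eval {A : Alg Ω ar} {ρ : A.carrier → A.carrier → Prop} {a : A.carrier}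
    (hs : ClassIsSub A ρ a) (t : Term Ω ar X) (v : X → (classAlg A ρ a hs).carrier) :
    (t.eval (classAlg A ρ a hs) v).1 = t.eval A (fun x => (v x).1) := by
  induction t with
  | var x => rfl
  | op ω ts ih =>
    show A.interp ω _ = A.interp ω _
    congr 1; funext i; exact ih i

lemma quot_exact {A : Alg Ω ar} {ρ : A.carrier → A.carrier → Prop} (hc : IsCongr A ρ)
    {x y : A.carrier} (h : Quot.mk ρ x = Quot.mk ρ y) : ρ x y := by
  have h2 : ρ x x = ρ x y :=
    congrArg (Quot.lift (ρ x) (fun a b hab => propext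
      ⟨fun hh => hc.trans hh hab, fun hh => hc.trans hh (hc.symm hab)⟩)) h
  exact cast h2 (hc.refl x)

lemma quot_interp {A : Alg Ω ar} {ρ : A.carrier → A.carrier → Prop} (hc : IsCongr A ρ)
    (ω : Ω) (g : Fin (ar ω) → A.carrier) :
    (A.quot ρ).interp ω (fun i => Quot.mk ρ (g i)) = Quot.mk ρ (A.interp ω g) := by
  refine Quot.sound (hc.compat _ _ _ fun i => ?_)
  exact quot_exact hc (Quot.out_eq (Quot.mk ρ (g i)))

lemma quot_eval {A : Alg Ω ar} {ρ : A.carrier → A.carrier → Prop} (hc : IsCongr A ρ)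
    (t : Term Ω ar X) (v : X → A.carrier) :
    t.eval (A.quot ρ) (fun x => Quot.mk ρ (v x)) = Quot.mk ρ (t.eval A v) := by
  induction t with
  | var x => rfl
  | op ω ts ih =>
    simp only [Term.eval]
    rw [show (fun i => (ts i).eval (A.quot ρ) fun x => Quot.mk ρ (v x))
        = (fun i => Quot.mk ρ ((ts i).eval A v)) from funext ih]
    exact quot_interp hc ω _
def repRel (Ew : Set (Term Ω ar ℕ × Term Ω ar ℕ)) (A : Alg Ω ar) :
    A.carrier → A.carrier → Prop :=
  fun a b => ∀ t, IsCongr A t → Models (A.quot t) Ew → t a b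

lemma repRel_congr (Ew : Set (Term Ω ar ℕ × Term Ω ar ℕ)) (A : Alg Ω ar) :
    IsCongr A (repRel Ew A) where
  refl a := fun t ht _ => ht.refl a
  symm h := fun t ht hm => ht.symm (h t ht hm)
  trans h h' := fun t ht hm => ht.trans (h t ht hm) (h' t ht hm)
  compat ω f g h := fun t ht hm => ht.compat ω f g fun i => h i t ht hm

lemma repRel_models (Ew : Set (Term Ω ar ℕ × Term Ω ar ℕ)) (A : Alg Ω ar) :
    Models (A.quot (repRel Ew A)) Ew := by
  intro e he v
  have hc := repRel_congr Ew A
  have hv : v = fun n => Quot.mk (repRel Ew A) ((v n).out) :=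
    funext fun n => (Quot.out_eq _).symm
  rw [hv, quot_eval hc, quot_eval hc]
  refine Quot.sound fun t ht hm => ?_
  have hs := hm e he (fun n => Quot.mk t ((v n).out))
  rw [quot_eval ht, quot_eval ht] at hs
  exact quot_exact ht hs

lemma repRel_replica (Ew : Set (Term Ω ar ℕ × Term Ω ar ℕ)) (A : Alg Ω ar) :
    IsReplica (VarietyOf Ew) A (repRel Ew A) :=
  ⟨repRel_congr Ew A, repRel_models Ew A, fun s hs hw _ _ hab => hab s hs hw⟩

lemma classIsSub_of_idem {Ew : Set (Term Ω ar ℕ × Term Ω ar ℕ)}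
    (hidem : ∀ ω : Ω, VSat (VarietyOf Ew)
      (Term.op ω fun _ => (.var 0 : Term Ω ar ℕ)) (.var 0))
    {A : Alg Ω ar} {ρ : A.carrier → A.carrier → Prop} (hc : IsCongr A ρ)
    (hW : VarietyOf Ew (A.quot ρ)) (a : A.carrier) : ClassIsSub A ρ a := by
  intro ω f hf
  apply quot_exact hc
  have h3 := hidem ω (A.quot ρ) hW (fun _ => Quot.mk ρ a)
  simp only [Term.eval] at h3
  calc (show (A.quot ρ).carrier from Quot.mk ρ (A.interp ω f))
      = (A.quot ρ).interp ω (fun i => Quot.mk ρ (f i)) := (quot_interp hc ω f).symm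
    _ = (A.quot ρ).interp ω (fun _ => Quot.mk ρ a) := by
        congr 1; exact funext fun i => Quot.sound (hf i)
    _ = (show (A.quot ρ).carrier from Quot.mk ρ a) := h3
lemma merge_lemma {Ev : Set (Term Ω ar ℕ × Term Ω ar ℕ)} {Ew : Set (Term Ω ar ℕ × Term Ω ar ℕ)}
    {A B : Alg Ω ar} (h : Hom A B) (m : Term Ω ar ℕ)
    (h1 : VSat (VarietyOf Ev) (m.subst (sub3 (.var 0) (.var 1) (.var 1))) (.var 0))
    (h2 : VSat (VarietyOf Ev) (m.subst (sub3 (.var 0) (.var 0) (.var 1))) (.var 1))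
    {ρ : A.carrier → A.carrier → Prop} (hc : IsCongr A ρ)
    (hrep : IsReplica (VarietyOf Ew) A ρ)
    (hA : MalProd (VarietyOf Ev) (VarietyOf Ew) A)
    (hsub : ∀ a : A.carrier, ClassIsSub A ρ a)
    (e x' y' : A.carrier) (hxy : ρ x' y') (hconn : h.toFun x' = h.toFun e) :
    ∃ g : A.carrier, h.toFun g = h.toFun y' ∧
      ∀ z, ρ z e → ∃ w, ρ w g ∧ h.toFun w = h.toFun z := by
  classical
  set vg : ℕ → A.carrier := fun n => if n = 2 then y' else e with hvg
  refine ⟨m.eval A vg, ?_, ?_⟩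
  · -- h (m.eval A vg) = h y', computed inside the class of x'
    have hV' : VarietyOf Ev (classAlg A ρ x' (hsub x')) := hA ρ hrep x' (hsub x')
    set u' : ℕ → (classAlg A ρ x' (hsub x')).carrier :=
      fun n => if n = 1 then ⟨y', hc.symm hxy⟩ else ⟨x', hc.refl x'⟩ with hu'
    have hs2 := h2 _ hV' u'
    rw [subst_eval] at hs2
    have hproj := congrArg Subtype.val hs2
    rw [classAlg_eval] at hproj
    have hB := congrArg h.toFun hproj
    rw [hom_eval] at hB
    -- hB : m.eval B (fun n => h ((sub3 ... n).eval _ u').1) = h y'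
    rw [hom_eval]
    have heq : (fun n => h.toFun (vg n))
        = (fun n => h.toFun (((sub3 (.var 0) (.var 0) (.var 1) n).eval
            (classAlg A ρ x' (hsub x')) u').1)) := by
      funext n
      rcases n with _ | _ | _ | n <;> simp [hvg, hu', sub3, Term.eval, hconn]
    rw [heq]
    exact hB
  · intro z hz
    set vz : ℕ → A.carrier := fun n => if n = 0 then z else if n = 2 then x' else e with hvz
    refine ⟨m.eval A vz, ?_, ?_⟩
    · refine congr_eval hc m fun n => ?_
      rcases n with _ | _ | _ | n <;> simp [hvz, hvg, hz, hxy, hc.refl]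
    · have hVE : VarietyOf Ev (classAlg A ρ e (hsub e)) := hA ρ hrep e (hsub e)
      set u : ℕ → (classAlg A ρ e (hsub e)).carrier :=
        fun n => if n = 0 then ⟨z, hz⟩ else ⟨e, hc.refl e⟩ with hu
      have hs1 := h1 _ hVE u
      rw [subst_eval] at hs1
      have hproj := congrArg Subtype.val hs1
      rw [classAlg_eval] at hproj
      have hB := congrArg h.toFun hproj
      rw [hom_eval] at hB
      rw [hom_eval]
      have heq : (fun n => h.toFun (vz n))
          = (fun n => h.toFun (((sub3 (.var 0) (.var 1) (.var 1) n).eval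
              (classAlg A ρ e (hsub e)) u).1)) := by
        funext n
        rcases n with _ | _ | _ | n <;> simp [hvz, hu, sub3, Term.eval, hconn]
      rw [heq]
      exact hB
/-- if `V` is congruence permutable (has a Mal'tsev term) and `W` is
idempotent, then `V ∘ W` is closed under homomorphic images (hence a variety). -/
theorem stmt_13 {Ω : Type} {ar : Ω → ℕ} (hτ : ∀ ω, 0 < ar ω)
    (Ev Ew : Set (Term Ω ar ℕ × Term Ω ar ℕ))
    (m : Term Ω ar ℕ) (hm : m.varSet ⊆ {0, 1, 2})
    (h1 : VSat (VarietyOf Ev) (m.subst (sub3 (.var 0) (.var 1) (.var 1))) (.var 0))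
    (h2 : VSat (VarietyOf Ev) (m.subst (sub3 (.var 0) (.var 0) (.var 1))) (.var 1))
    (hidem : ∀ ω : Ω, VSat (VarietyOf Ew)
      (Term.op ω fun _ => (.var 0 : Term Ω ar ℕ)) (.var 0)) :
    ∀ (A B : Alg Ω ar) (h : Hom A B), Function.Surjective h.toFun →
      MalProd (VarietyOf Ev) (VarietyOf Ew) A →
      MalProd (VarietyOf Ev) (VarietyOf Ew) B := by
  intro A B h hsurj hA
  classical
  set ρ := repRel Ew A with hρdef
  have hc : IsCongr A ρ := repRel_congr Ew A
  have hrep : IsReplica (VarietyOf Ew) A ρ := repRel_replica Ew A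
  have hsub : ∀ a, ClassIsSub A ρ a := fun a =>
    classIsSub_of_idem hidem hc (repRel_models Ew A) a
  set θ : B.carrier → B.carrier → Prop :=
    fun c c' => ∃ x y, ρ x y ∧ h.toFun x = c ∧ h.toFun y = c' with hθdef
  have θrefl : ∀ c, θ c c := fun c => by
    obtain ⟨x, hx⟩ := hsurj c; exact ⟨x, x, hc.refl x, hx, hx⟩
  have θsymm : ∀ {c c'}, θ c c' → θ c' c := by
    rintro c c' ⟨x, y, hxy, hx, hy⟩; exact ⟨y, x, hc.symm hxy, hy, hx⟩
  have θtrans : ∀ {c c' c''}, θ c c' → θ c' c'' → θ c c'' := by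
    rintro c c' c'' ⟨x, y, hxy, hx, hy⟩ ⟨x', y', hxy', hx', hy'⟩
    obtain ⟨g, hg, hcov⟩ := merge_lemma h m h1 h2 hc hrep hA hsub y x' y' hxy'
      (by rw [hx', hy])
    obtain ⟨w, hwg, hwx⟩ := hcov x hxy
    exact ⟨w, g, hwg, by rw [hwx, hx], by rw [hg, hy']⟩
  have θcongr : IsCongr B θ := by
    refine ⟨θrefl, θsymm, θtrans, ?_⟩
    intro ω f g hf
    choose xx yy hxy hx hy using hf
    exact ⟨A.interp ω xx, A.interp ω yy, hc.compat ω xx yy hxy,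
      by rw [h.map]; exact congrArg _ (funext hx),
      by rw [h.map]; exact congrArg _ (funext hy)⟩
  have θmod : Models (B.quot θ) Ew := by
    intro e he v
    choose aA haA using fun n => hsurj ((v n).out)
    have hv : v = fun n => Quot.mk θ (h.toFun (aA n)) :=
      funext fun n => by rw [haA n]; exact (Quot.out_eq (r := θ) (v n)).symm
    rw [hv, quot_eval θcongr, quot_eval θcongr, ← hom_eval, ← hom_eval]
    refine Quot.sound ⟨_, _, ?_, rfl, rfl⟩
    have hs := repRel_models Ew A e he (fun n => Quot.mk ρ (aA n))
    rw [quot_eval hc, quot_eval hc] at hs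
    exact quot_exact hc hs
  intro r hr b hb
  have hrθ : ∀ c c', r c c' → θ c c' := hr.2.2 θ θcongr θmod
  intro e he v
  set vb : ℕ → B.carrier := fun n => (v n).1 with hvb
  have cover : ∀ N : ℕ, ∃ a : A.carrier,
      (∃ x, ρ x a ∧ h.toFun x = vb 0) ∧ ∀ n < N, ∃ x, ρ x a ∧ h.toFun x = vb n := by
    intro N
    induction N with
    | zero =>
      obtain ⟨x0, hx0⟩ := hsurj (vb 0)
      exact ⟨x0, ⟨x0, hc.refl x0, hx0⟩, fun n hn => absurd hn (Nat.not_lt_zero n)⟩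
    | succ N ih =>
      obtain ⟨a, ⟨x0, hx0a, hx0⟩, hcov⟩ := ih
      have hθ0N : θ (vb 0) (vb N) := hrθ _ _ (hr.1.trans (v 0).2 (hr.1.symm (v N).2))
      obtain ⟨x', y', hxy', hx', hy'⟩ := hθ0N
      obtain ⟨g, hg, hgcov⟩ := merge_lemma h m h1 h2 hc hrep hA hsub x0 x' y' hxy'
        (by rw [hx', hx0])
      refine ⟨g, ?_, ?_⟩
      · obtain ⟨w, hwg, hwx⟩ := hgcov x0 (hc.refl x0)
        exact ⟨w, hwg, by rw [hwx, hx0]⟩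
      · intro n hn
        rcases Nat.lt_succ_iff_lt_or_eq.mp hn with hn' | rfl
        · obtain ⟨xn, hxna, hxn⟩ := hcov n hn'
          obtain ⟨w, hwg, hwx⟩ := hgcov xn (hc.trans hxna (hc.symm hx0a))
          exact ⟨w, hwg, by rw [hwx, hxn]⟩
        · exact ⟨g, hc.refl g, by rw [hg, hy']⟩
  obtain ⟨N1, hN1⟩ := varSet_bounded e.1
  obtain ⟨N2, hN2⟩ := varSet_bounded e.2
  obtain ⟨a, -, hcov⟩ := cover (max N1 N2)
  set wc : ℕ → (classAlg A ρ a (hsub a)).carrier :=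
    fun n => if hn : n < max N1 N2 then ⟨(hcov n hn).choose, (hcov n hn).choose_spec.1⟩
      else ⟨a, hc.refl a⟩ with hwc
  have hVE : VarietyOf Ev (classAlg A ρ a (hsub a)) := hA ρ hrep a (hsub a)
  have hsat := hVE e he wc
  have hproj := congrArg Subtype.val hsat
  rw [classAlg_eval, classAlg_eval] at hproj
  have hBeq := congrArg h.toFun hproj
  rw [hom_eval, hom_eval] at hBeq
  have hagree : ∀ t : Term Ω ar ℕ, (∀ x ∈ t.varSet, x < max N1 N2) →
      Term.eval B vb t = Term.eval B (fun n => h.toFun ((wc n).1)) t := by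
    intro t ht
    refine eval_congr_on_varSet B t _ _ fun x hx => ?_
    have hxN : x < max N1 N2 := ht x hx
    have : (wc x) = ⟨(hcov x hxN).choose, (hcov x hxN).choose_spec.1⟩ := by
      simp only [hwc]; exact dif_pos hxN
    rw [this]
    exact ((hcov x hxN).choose_spec.2).symm
  have key : Term.eval B vb e.1 = Term.eval B vb e.2 := by
    rw [hagree e.1 (fun x hx => lt_of_lt_of_le (hN1 x hx) (le_max_left _ _)),
        hagree e.2 (fun x hx => lt_of_lt_of_le (hN2 x hx) (le_max_right _ _))]
    exact hBeq
  apply Subtype.ext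
  rw [classAlg_eval, classAlg_eval]
  exact key
end
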